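/- arXiv:1708.04864 — 2 statements merged into one kernel-verified Lean document; each statement's English description precedes it below -/
import Mathlib

section
/- Let Σ be a finite alphabet with at least two letters, let 𝒜 be a synchronizing automaton over Σ with n states, and let M = 𝓜(Syn(𝒜)) be its set of minimal reset words. If for some natural number ℓ with 4ℓ ≤ n² − 3n + 2 (i.e. 4ℓ ≤ (n−1)(n−2)) there exists a word x of length ℓ over Σ that is not a factor of any word of M, then 𝒜 has a reset word of length at most (n−1)² (i.e. the Černý bound holds for 𝒜). -/
/-- The action of a word on a state: `actW δ q w` is `q · w`. -/
def actW {A Q : Type*} (δ : Q → A → Q) (q : Q) (w : List A) : Q := w.foldl δ q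

/-- The set of reset (synchronizing) words of the automaton `(Q, δ)`. -/
def SynSet {A Q : Type*} (δ : Q → A → Q) : Set (List A) :=
  {w | ∃ q : Q, ∀ p : Q, actW δ p w = q}

/-- `I` is a two-sided ideal of `Σ*`. -/
def IsIdealLang {A : Type*} (I : Set (List A)) : Prop :=
  ∀ x u y : List A, u ∈ I → x ++ u ++ y ∈ I

/-- The set of minimal words of an ideal: `𝓜(I) = I \ (Σ⁺I ∪ IΣ⁺)`. -/
def MinWords {A : Type*} (I : Set (List A)) : Set (List A) :=
  I \ ({w | ∃ x u : List A, x ≠ [] ∧ u ∈ I ∧ w = x ++ u} ∪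
       {w | ∃ u x : List A, u ∈ I ∧ x ≠ [] ∧ w = u ++ x})

/-!
Greedy synchronization merges one pair of states at a time by a shortest merging word, of length
at most `C(n, 2)`; inserting `x` after each merging word gives a reset word `x v₁ x v₂ x ⋯ vₜ x`.
No minimal reset word contains `x`, so a minimal reset factor of a reset word `a x b` lies inside
`a` followed by `x` without its last letter, or inside `x` without its first letter followed by
`b`. Cutting `x v₁ x v₂ x ⋯` this way from the left either stops at a reset word `c vᵢ x'` with
`|c| ≤ ℓ` and `|x'| = ℓ - 1`, or runs down to a reset word of length at most `ℓ`. Both have length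
below `2ℓ + C(n, 2) ≤ (n - 1)²`.
-/

section

variable {α A Q : Type*}

lemma List.exists_mem_forall_length_le {s : Set (List α)} (hs : s.Nonempty) :
    ∃ w ∈ s, ∀ u ∈ s, w.length ≤ u.length := by
  obtain ⟨w, hw, hmin⟩ := (measure List.length).wf.has_min s hs
  exact ⟨w, hw, fun u hu => not_lt.mp (hmin u hu)⟩

lemma List.IsInfix.infix_append_dropLast_or_infix_tail_append_or_infix {m a x b : List α}
    (h : m <:+: a ++ x ++ b) (hx : x ≠ []) :
    m <:+: a ++ x.dropLast ∨ m <:+: x.tail ++ b ∨ x <:+: m := by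
  obtain ⟨s, t, hst⟩ := h
  have hlen := congrArg List.length hst
  have hx1 : 0 < x.length := List.length_pos_iff.mpr hx
  simp only [List.length_append] at hlen
  have hpre : s ++ m <+: a ++ x ++ b := ⟨t, hst⟩
  have hsuf : m ++ t <:+ a ++ x ++ b := ⟨s, by rw [← hst, List.append_assoc]⟩
  by_cases hleft : s.length + m.length ≤ a.length + (x.length - 1)
  · have : a ++ x.dropLast <+: a ++ x ++ b :=
      ((List.prefix_append_right_inj a).mpr x.dropLast_prefix).trans (List.prefix_append _ b)
    refine .inl (List.infix_append s m [] |>.trans ?_)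
    rw [List.append_nil]
    refine (List.prefix_of_prefix_length_le hpre this ?_).isInfix
    simp only [List.length_append, List.length_dropLast]
    omega
  by_cases hright : a.length + 1 ≤ s.length
  · have : x.tail ++ b <:+ a ++ x ++ b := by
      rw [List.append_assoc]
      exact (List.suffix_append_self_iff.mpr x.tail_suffix).trans (List.suffix_append a _)
    refine .inr (.inl (List.infix_append [] m t |>.trans ?_))
    rw [List.nil_append]
    refine (List.suffix_of_suffix_length_le hsuf this ?_).isInfix
    simp only [List.length_append, List.length_tail]
    omega
  obtain ⟨r, rfl⟩ : s <+: a :=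
    List.prefix_of_prefix_length_le (List.prefix_append s m |>.trans hpre)
      ((List.prefix_append a x).trans (List.prefix_append _ b)) (by omega)
  have : s ++ (r ++ x) <+: s ++ m := by
    rw [← List.append_assoc]
    refine List.prefix_of_prefix_length_le (List.prefix_append _ b) hpre ?_
    simp only [List.length_append] at hlen hleft ⊢
    omega
  refine .inr (.inr ((List.infix_append r x []).trans ?_))
  simpa using ((List.prefix_append_right_inj s).mp this).isInfix

lemma actW_append (δ : Q → A → Q) (q : Q) (u v : List A) :
    actW δ q (u ++ v) = actW δ (actW δ q u) v :=
  List.foldl_append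

lemma isIdealLang_synSet (δ : Q → A → Q) : IsIdealLang (SynSet δ) := by
  rintro a u b ⟨q, hq⟩
  exact ⟨actW δ q b, fun p => by rw [actW_append, actW_append, hq]⟩

lemma IsIdealLang.mem_of_infix {I : Set (List A)} (hI : IsIdealLang I) {u w : List A}
    (hu : u ∈ I) (h : u <:+: w) : w ∈ I := by
  obtain ⟨s, t, rfl⟩ := h
  exact hI s u t hu

/-- A shortest factor of `w` lying in `I` is a minimal word of `I`. -/
lemma exists_mem_minWords_infix {I : Set (List A)} {w : List A} (hw : w ∈ I) :
    ∃ m ∈ MinWords I, m <:+: w := by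
  obtain ⟨m, ⟨hmI, hmw⟩, hmin⟩ :=
    List.exists_mem_forall_length_le (s := {m | m ∈ I ∧ m <:+: w}) ⟨w, hw, List.infix_refl w⟩
  refine ⟨m, ⟨hmI, ?_⟩, hmw⟩
  rintro (⟨c, u, hc, hu, rfl⟩ | ⟨u, c, hu, hc, rfl⟩)
  · have := hmin u ⟨hu, (List.infix_append c u []).trans (by simpa using hmw)⟩
    exact hc (by simpa using this)
  · have := hmin u ⟨hu, (List.infix_append [] u c).trans (by simpa using hmw)⟩
    exact hc (by simpa using this)

section MissingFactor

variable {I : Set (List A)} {x : List A}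

lemma IsIdealLang.append_dropLast_mem_or_tail_append_mem (hI : IsIdealLang I) (hx : x ≠ [])
    (hmiss : ∀ w ∈ MinWords I, ¬ x <:+: w) {a b : List A} (h : a ++ x ++ b ∈ I) :
    a ++ x.dropLast ∈ I ∨ x.tail ++ b ∈ I := by
  obtain ⟨m, hm, hmx⟩ := exists_mem_minWords_infix h
  rcases hmx.infix_append_dropLast_or_infix_tail_append_or_infix hx with h' | h' | h'
  · exact .inl (hI.mem_of_infix hm.1 h')
  · exact .inr (hI.mem_of_infix hm.1 h')
  · exact absurd h' (hmiss m hm)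

lemma IsIdealLang.exists_mem_length_lt (hI : IsIdealLang I) (hx : x ≠ [])
    (hmiss : ∀ w ∈ MinWords I, ¬ x <:+: w) {K : ℕ} {vs : List (List A)}
    (hvs : ∀ v ∈ vs, v.length ≤ K) {c : List A} (hc : c.length ≤ x.length)
    (h : c ++ (vs.map (· ++ x)).flatten ∈ I) :
    ∃ u ∈ I, u.length < 2 * x.length + K := by
  have hx1 : 0 < x.length := List.length_pos_iff.mpr hx
  induction vs generalizing c with
  | nil => exact ⟨c, by simpa using h, by omega⟩
  | cons v vs ih =>
    rw [List.map_cons, List.flatten_cons, ← List.append_assoc, ← List.append_assoc] at h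
    have hv := hvs v List.mem_cons_self
    rcases hI.append_dropLast_mem_or_tail_append_mem hx hmiss h with h' | h'
    · refine ⟨_, h', ?_⟩
      simp only [List.length_append, List.length_dropLast]
      omega
    · exact ih (fun w hw => hvs w (List.mem_cons_of_mem v hw))
        (by simp only [List.length_tail]; omega) h'

end MissingFactor

section Automaton

variable {δ : Q → A → Q}

/-- A shortest word merging `p` and `q` passes through pairwise distinct pairs of distinct
states: a repeated pair could be cut out. -/
lemma exists_merging_word_length_le_choose_two [Fintype Q] {p q : Q}
    (h : ∃ w, actW δ p w = actW δ q w) :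
    ∃ w, actW δ p w = actW δ q w ∧ w.length ≤ (Fintype.card Q).choose 2 := by
  classical
  obtain ⟨w, hw, hmin⟩ := List.exists_mem_forall_length_le (s := {w | actW δ p w = actW δ q w}) h
  refine ⟨w, hw, ?_⟩
  let pair (i : ℕ) : Sym2 Q := s(actW δ p (w.take i), actW δ q (w.take i))
  have hdiag (i : ℕ) (hi : i < w.length) : ¬ (pair i).IsDiag := fun hd => by
    have := hmin _ (Sym2.mk_isDiag_iff.mp hd)
    simp only [List.length_take] at this
    omega
  have hle (i j : ℕ) (hij : i ≤ j) (hj : j < w.length) (hpair : pair i = pair j) : j ≤ i := by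
    have hmap := congrArg (Sym2.map (actW δ · (w.drop j))) hpair
    simp only [pair, Sym2.map_mk, ← actW_append, List.take_append_drop] at hmap
    have hmerge : actW δ p (w.take i ++ w.drop j) = actW δ q (w.take i ++ w.drop j) := by
      rw [← Sym2.mk_isDiag_iff, hmap, Sym2.mk_isDiag_iff]
      exact hw
    have := hmin _ hmerge
    simp only [List.length_append, List.length_take, List.length_drop] at this
    omega
  have hinj : Function.Injective
      fun i : Fin w.length => (⟨pair i, hdiag i i.2⟩ : {z : Sym2 Q // ¬ z.IsDiag}) := by
    intro i j hij
    have hpair : pair i = pair j := congrArg Subtype.val hij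
    rcases le_total i j with h | h
    · exact le_antisymm h (hle i j h j.2 hpair)
    · exact le_antisymm (hle j i h i.2 hpair.symm) h
  calc w.length = Fintype.card (Fin w.length) := (Fintype.card_fin _).symm
    _ ≤ _ := Fintype.card_le_of_injective _ hinj
    _ = _ := Sym2.card_subtype_not_diag

lemma exists_forall_actW_flatten_eq {K : ℕ}
    (hmerge : ∀ p q : Q, ∃ v, actW δ p v = actW δ q v ∧ v.length ≤ K) (x : List A)
    (S : Finset Q) :
    ∃ vs : List (List A), (∀ v ∈ vs, v.length ≤ K) ∧ ∀ p ∈ S, ∀ q ∈ S,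
      actW δ p (vs.map (· ++ x)).flatten = actW δ q (vs.map (· ++ x)).flatten := by
  classical
  induction hS : S.card using Nat.strong_induction_on generalizing S with
  | _ k ih =>
  by_cases h1 : S.card ≤ 1
  · exact ⟨[], by simp, fun p hp q hq => by rw [Finset.card_le_one.mp h1 p hp q hq]⟩
  obtain ⟨p, hp, q, hq, hpq⟩ := Finset.one_lt_card.mp (not_le.mp h1)
  obtain ⟨v, hv, hvK⟩ := hmerge p q
  let step (r : Q) : Q := actW δ (actW δ r v) x
  have hlt : (S.image step).card < k := hS ▸ lt_of_le_of_ne Finset.card_image_le fun heq =>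
    hpq (Finset.card_image_iff.mp heq hp hq (by simp only [step, hv]))
  obtain ⟨vs, hvs, heq⟩ := ih _ hlt _ rfl
  refine ⟨v :: vs, List.forall_mem_cons.mpr ⟨hvK, hvs⟩, fun r hr r' hr' => ?_⟩
  simp only [List.map_cons, List.flatten_cons, actW_append]
  exact heq _ (Finset.mem_image_of_mem step hr) _ (Finset.mem_image_of_mem step hr')

lemma exists_append_flatten_mem_synSet [Fintype Q] (hsync : (SynSet δ).Nonempty)
    (x : List A) :
    ∃ vs : List (List A), (∀ v ∈ vs, v.length ≤ (Fintype.card Q).choose 2) ∧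
      x ++ (vs.map (· ++ x)).flatten ∈ SynSet δ := by
  obtain ⟨w, q, hw⟩ := hsync
  obtain ⟨vs, hvs, heq⟩ := exists_forall_actW_flatten_eq
    (fun p p' => exists_merging_word_length_le_choose_two ⟨w, (hw p).trans (hw p').symm⟩)
    x Finset.univ
  refine ⟨vs, hvs, actW δ q (x ++ (vs.map (· ++ x)).flatten), fun p => ?_⟩
  simp only [actW_append]
  exact heq _ (Finset.mem_univ _) _ (Finset.mem_univ _)

end Automaton

lemma two_mul_add_choose_two_le_sq {n ℓ : ℕ} (h : 4 * ℓ ≤ (n - 1) * (n - 2)) :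
    2 * ℓ + n.choose 2 ≤ (n - 1) ^ 2 := by
  have hchoose : n.choose 2 * 2 = n * (n - 1) := by
    rw [Nat.choose_two_right, Nat.div_two_mul_two_of_even (Nat.even_mul_pred_self n)]
  rcases n with _ | _ | n
  · simp_all
  · simp_all
  · simp only [show n + 1 + 1 - 2 = n by omega, Nat.add_sub_cancel] at h hchoose ⊢
    nlinarith

end

theorem stmt1_general {A Q : Type*} [Fintype Q]
    (δ : Q → A → Q) (n : ℕ) (hn : Fintype.card Q = n)
    (hsync : (SynSet δ).Nonempty)
    (ℓ : ℕ) (hℓ : 4 * ℓ ≤ (n - 1) * (n - 2))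
    (x : List A) (hx : x.length = ℓ)
    (hmiss : ∀ w ∈ MinWords (SynSet δ), ¬ x <:+: w) :
    ∃ u ∈ SynSet δ, u.length ≤ (n - 1) ^ 2 := by
  have hx0 : x ≠ [] := by
    rintro rfl
    obtain ⟨m, hm, -⟩ := exists_mem_minWords_infix hsync.some_mem
    exact hmiss m hm List.nil_infix
  obtain ⟨vs, hvs, hreset⟩ := exists_append_flatten_mem_synSet hsync x
  obtain ⟨u, hu, hlen⟩ :=
    (isIdealLang_synSet δ).exists_mem_length_lt hx0 hmiss hvs le_rfl hreset
  have := two_mul_add_choose_two_le_sq hℓ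
  subst hn hx
  exact ⟨u, hu, by omega⟩

/-- Cerny's conjecture holds for a synchronizing automaton with `n`
states whose set of minimal reset words misses a factor of length `ℓ` with
`4ℓ ≤ n² - 3n + 2 = (n-1)(n-2)`. -/
theorem stmt1 {A Q : Type*} [Fintype A] [Fintype Q] [Nonempty Q]
    (hA : 1 < Fintype.card A)
    (δ : Q → A → Q) (n : ℕ) (hn : Fintype.card Q = n)
    (hsync : (SynSet δ).Nonempty)
    (ℓ : ℕ) (hℓ : 4 * ℓ ≤ (n - 1) * (n - 2))
    (x : List A) (hx : x.length = ℓ)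
    (hmiss : ∀ w ∈ MinWords (SynSet δ), ¬ x <:+: w) :
    ∃ u ∈ SynSet δ, u.length ≤ (n - 1) ^ 2 :=
  stmt1_general δ n hn hsync ℓ hℓ x hx hmiss
end

section
/- Let Σ be a finite alphabet with at least two letters and let I ⊆ Σ* be a nonempty ideal with ε ∉ I. Then the tail structure family 𝒯(I) = { Σ*·ι(u) : u ∈ I } (equivalently, the family of all sets Σ*·w where w ∈ 𝓜(I)·Σ* and the word w with its first letter removed does not belong to I) is a reset left decomposition of I. -/
/-- `τ(u)`: the longest suffix of `u` not belonging to `I`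
(the suffix of `u` of length `k` is `u.drop (u.length - k)`). -/
noncomputable def tailW {A : Type*} (I : Set (List A)) (u : List A) : List A :=
  u.drop (u.length - sSup {k | k ≤ u.length ∧ u.drop (u.length - k) ∉ I})

/-- `ι(u)`: the suffix of `u` of length `|τ(u)| + 1`,
i.e. the shortest suffix of `u` belonging to `I`. -/
noncomputable def iotaW {A : Type*} (I : Set (List A)) (u : List A) : List A :=
  u.drop (u.length - ((tailW I u).length + 1))

/-- `L` is a left ideal: `Σ*·L ⊆ L`. -/
def IsLeftIdeal {A : Type*} (L : Set (List A)) : Prop :=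
  ∀ x w : List A, w ∈ L → x ++ w ∈ L

/-- A reset left decomposition of an ideal `I`: a collection of pairwise disjoint
nonempty left ideals whose union is `I`, such that (i) for every letter `a` and
every member `J` there is a member `J'` with `J·a ⊆ J'`, and (ii) for every word
`u`, if `I·u ⊆ J` for some member `J` then `u ∈ I`. -/
def IsResetLeftDecomp {A : Type*} (I : Set (List A)) (F : Set (Set (List A))) : Prop :=
  (∀ J ∈ F, J.Nonempty) ∧
  (∀ J ∈ F, IsLeftIdeal J) ∧
  (F.PairwiseDisjoint id) ∧
  (⋃₀ F = I) ∧
  (∀ a : A, ∀ J ∈ F, ∃ J' ∈ F, ∀ w ∈ J, w ++ [a] ∈ J') ∧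
  (∀ u : List A, (∃ J ∈ F, ∀ v ∈ I, v ++ u ∈ J) → u ∈ I)

/-!
The words `Σ*·ι(u)` are exactly the words whose shortest suffix in `I` is `ι(u)`, so two members
of `𝒯(I)` sharing a word coincide, and `𝒯(I)` partitions `I`. Since `ι(u)a ∈ I` is a suffix of
`ua`, minimality makes `ι(ua)` a suffix of `ι(u)a`, which gives the letter action. For the reset condition, let
`I·u ⊆ Σ*·s` with `s ∈ I`. If `u` is not in `I`, then `s = t ++ u` with `t ≠ []`, and testing the
inclusion on the words `s ++ [c] ∈ I` shows that the last letter of `t` is `c` for every letter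
`c`, which is impossible with two distinct letters.
-/

section Ideal

variable {A : Type*} {I : Set (List A)}

theorem IsIdealLang.mem_of_isSuffix (hI : IsIdealLang I) {s w : List A} (h : s <:+ w)
    (hs : s ∈ I) : w ∈ I := by
  obtain ⟨t, rfl⟩ := h
  simpa using hI t s [] hs

theorem IsIdealLang.append_mem (hI : IsIdealLang I) {w : List A} (hw : w ∈ I) (v : List A) :
    w ++ v ∈ I := by
  simpa using hI [] w v hw

theorem IsIdealLang.mem_of_forall_isSuffix_append (hI : IsIdealLang I) {a b : A} (hab : a ≠ b)
    {s u : List A} (hs : s ∈ I) (h : ∀ v ∈ I, s <:+ v ++ u) : u ∈ I := by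
  rcases List.suffix_or_suffix_of_suffix (h s hs) (List.suffix_append s u) with hsu | ⟨t, rfl⟩
  · exact hI.mem_of_isSuffix hsu hs
  rcases eq_or_ne t [] with rfl | ht
  · simpa using hs
  have getLast_eq : ∀ c, t.getLast ht = c := fun c => by
    have htc : t <:+ t ++ u ++ [c] :=
      List.suffix_append_self_iff.1 (h _ (hI.append_mem hs [c]))
    simpa using htc.getLast ht
  exact absurd ((getLast_eq a).symm.trans (getLast_eq b)) hab

end Ideal

section Tail

variable {A : Type*} {I : Set (List A)} {s u : List A}

theorem tailW_isSuffix (I : Set (List A)) (u : List A) : tailW I u <:+ u :=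
  List.drop_suffix _ _

theorem iotaW_isSuffix (I : Set (List A)) (u : List A) : iotaW I u <:+ u :=
  List.drop_suffix _ _

theorem tailW_notMem_and_isGreatest (hε : ([] : List A) ∉ I) (u : List A) :
    tailW I u ∉ I ∧ ∀ s, s <:+ u → s ∉ I → s.length ≤ (tailW I u).length := by
  unfold tailW
  set S : Set ℕ := {k | k ≤ u.length ∧ u.drop (u.length - k) ∉ I}
  have hbdd : BddAbove S := ⟨u.length, fun k hk => hk.1⟩
  have hmem : sSup S ∈ S := Nat.sSup_mem ⟨0, Nat.zero_le _, by simpa using hε⟩ hbdd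
  have hlen : (u.drop (u.length - sSup S)).length = sSup S := by
    rw [List.length_drop]
    have := hmem.1
    omega
  refine ⟨hmem.2, fun s hs hsI => ?_⟩
  rw [hlen]
  exact le_csSup hbdd ⟨hs.length_le, by rwa [← List.suffix_iff_eq_drop.1 hs]⟩

variable (hI : IsIdealLang I) (hε : ([] : List A) ∉ I)
include hI hε

theorem length_tailW_lt_of_isSuffix (hs : s <:+ u) (hsI : s ∈ I) :
    (tailW I u).length < s.length := by
  by_contra! hle
  exact (tailW_notMem_and_isGreatest hε u).1
    (hI.mem_of_isSuffix (List.suffix_of_suffix_length_le hs (tailW_isSuffix I u) hle) hsI)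

theorem length_iotaW (hu : u ∈ I) : (iotaW I u).length = (tailW I u).length + 1 := by
  have := length_tailW_lt_of_isSuffix hI hε (List.suffix_refl u) hu
  rw [iotaW, List.length_drop]
  omega

theorem iotaW_mem (hu : u ∈ I) : iotaW I u ∈ I := by
  by_contra h
  have := (tailW_notMem_and_isGreatest hε u).2 _ (iotaW_isSuffix I u) h
  rw [length_iotaW hI hε hu] at this
  omega

theorem iotaW_isSuffix_of_isSuffix (hs : s <:+ u) (hsI : s ∈ I) : iotaW I u <:+ s := by
  refine List.suffix_of_suffix_length_le (iotaW_isSuffix I u) hs ?_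
  rw [length_iotaW hI hε (hI.mem_of_isSuffix hs hsI)]
  exact length_tailW_lt_of_isSuffix hI hε hs hsI

theorem iotaW_eq_of_iotaW_isSuffix {v w : List A} (hv : v ∈ I) (h : iotaW I v <:+ w) :
    iotaW I w = iotaW I v := by
  have hw : w ∈ I := hI.mem_of_isSuffix h (iotaW_mem hI hε hv)
  have hwv : iotaW I w <:+ iotaW I v := iotaW_isSuffix_of_isSuffix hI hε h (iotaW_mem hI hε hv)
  exact hwv.sublist.antisymm (iotaW_isSuffix_of_isSuffix hI hε
    (hwv.trans (iotaW_isSuffix I v)) (iotaW_mem hI hε hw)).sublist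

end Tail

section TailStructure

variable {A : Type*} {I : Set (List A)}

def withSuffix (s : List A) : Set (List A) := {w | ∃ x, w = x ++ s}

theorem mem_withSuffix {s w : List A} : w ∈ withSuffix s ↔ s <:+ w :=
  ⟨fun ⟨x, hx⟩ => ⟨x, hx.symm⟩, fun ⟨x, hx⟩ => ⟨x, hx.symm⟩⟩

theorem isLeftIdeal_withSuffix (s : List A) : IsLeftIdeal (withSuffix s) :=
  fun _ _ hw => mem_withSuffix.2 (List.suffix_append_of_suffix (mem_withSuffix.1 hw))

def tailStructure (I : Set (List A)) : Set (Set (List A)) :=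
  {J | ∃ u ∈ I, J = withSuffix (iotaW I u)}

variable (hI : IsIdealLang I) (hε : ([] : List A) ∉ I)
include hI hε

theorem tailStructure_pairwiseDisjoint : (tailStructure I).PairwiseDisjoint id := by
  rintro _ ⟨u, hu, rfl⟩ _ ⟨v, hv, rfl⟩ hne
  refine Set.disjoint_left.2 fun w hwu hwv => hne ?_
  rw [← iotaW_eq_of_iotaW_isSuffix hI hε hu (mem_withSuffix.1 hwu),
    iotaW_eq_of_iotaW_isSuffix hI hε hv (mem_withSuffix.1 hwv)]

theorem sUnion_tailStructure : ⋃₀ tailStructure I = I := by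
  ext w
  constructor
  · rintro ⟨_, ⟨u, hu, rfl⟩, hw⟩
    exact hI.mem_of_isSuffix (mem_withSuffix.1 hw) (iotaW_mem hI hε hu)
  · exact fun hw => ⟨_, ⟨w, hw, rfl⟩, mem_withSuffix.2 (iotaW_isSuffix I w)⟩

theorem append_singleton_mem_withSuffix_iotaW {u : List A} (hu : u ∈ I) (a : A) {w : List A}
    (hw : w ∈ withSuffix (iotaW I u)) : w ++ [a] ∈ withSuffix (iotaW I (u ++ [a])) := by
  have hsuf : iotaW I (u ++ [a]) <:+ iotaW I u ++ [a] :=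
    iotaW_isSuffix_of_isSuffix hI hε (List.suffix_append_self_iff.2 (iotaW_isSuffix I u))
      (hI.append_mem (iotaW_mem hI hε hu) [a])
  exact mem_withSuffix.2 (hsuf.trans (List.suffix_append_self_iff.2 (mem_withSuffix.1 hw)))

end TailStructure

theorem stmt10_general {A : Type*} [Fintype A] (hA : 1 < Fintype.card A)
    (I : Set (List A)) (hI : IsIdealLang I) (hε : ([] : List A) ∉ I) :
    IsResetLeftDecomp I
      {J | ∃ u ∈ I, J = {w : List A | ∃ x : List A, w = x ++ iotaW I u}} := by
  change IsResetLeftDecomp I (tailStructure I)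
  obtain ⟨a, b, hab⟩ := Fintype.exists_pair_of_one_lt_card hA
  refine ⟨?_, ?_, tailStructure_pairwiseDisjoint hI hε, sUnion_tailStructure hI hε, ?_, ?_⟩
  · rintro _ ⟨u, -, rfl⟩
    exact ⟨_, mem_withSuffix.2 (List.suffix_refl _)⟩
  · rintro _ ⟨u, -, rfl⟩
    exact isLeftIdeal_withSuffix _
  · rintro c _ ⟨u, hu, rfl⟩
    exact ⟨_, ⟨u ++ [c], hI.append_mem hu [c], rfl⟩,
      fun w => append_singleton_mem_withSuffix_iotaW hI hε hu c⟩
  · rintro u ⟨_, ⟨v, hv, rfl⟩, hJ⟩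
    exact hI.mem_of_forall_isSuffix_append hab (iotaW_mem hI hε hv)
      fun w hw => mem_withSuffix.1 (hJ w hw)

/-- the tail structure family `𝒯(I) = {Σ*·ι(u) : u ∈ I}` is a reset
left decomposition of `I`. -/
theorem stmt10 {A : Type*} [Fintype A] (hA : 1 < Fintype.card A)
    (I : Set (List A)) (hI : IsIdealLang I) (hε : ([] : List A) ∉ I)
    (hne : I.Nonempty) :
    IsResetLeftDecomp I
      {J | ∃ u ∈ I, J = {w : List A | ∃ x : List A, w = x ++ iotaW I u}} :=
  stmt10_general hA I hI hε
end
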